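/- Let (Ω, R, K) be a bidirectional kinetic system satisfying detailed balance with conservation-law space M ≠ {0}. Then there exists a substance s ∈ Ω such that for every value n_s > 0, the reduced kinetic system (Ω \ {s}, R_{Ω\{s}}, K[n_s]) obtained by freezing the concentration of s at n_s satisfies the detailed balance property. -/

import Mathlib

/-!
Adding a conservation law `m ∈ ker 𝐑ᵀ` to an energy `E` yields another energy, so when
`m t ≠ 0` the energy can be shifted to take the value `-log nₜ` at `t`. The concentrations
`exp (-E)` balance every reaction of the full system. Freezing the substances of `U` at these
equilibrium values, the reduced rates of `Rb` and `-Rb`, multiplied by the remaining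
concentrations, are sums of the full-system terms of the reactions `R` and `-R` projecting to
`Rb`, so the full balance passes to the reduced system.
-/

open Finset

/-- Projection of a reaction onto the complement of `U`, zeroing the coordinates in `U`. -/
def projV {N : ℕ} (U : Finset (Fin N)) (R : Fin N → ℤ) : Fin N → ℤ :=
  fun k => if k ∈ U then 0 else R k

/-- The `U`-reduced reaction set: nonzero projections of the reactions. -/
noncomputable def RV {N : ℕ} (Rset : Finset (Fin N → ℤ)) (U : Finset (Fin N)) :
    Finset (Fin N → ℤ) :=
  (Rset.image (projV U)).erase 0

/-- The reduced rate of a reduced reaction `Rb`. -/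
noncomputable def Kred {N : ℕ} (Rset : Finset (Fin N → ℤ)) (U : Finset (Fin N))
    (K : (Fin N → ℤ) → ℝ) (n : Fin N → ℝ) (Rb : Fin N → ℤ) : ℝ :=
  ∑ R ∈ Rset.filter (fun R => projV U R = Rb), K R * ∏ t ∈ U, n t ^ ((-(R t)).toNat)

section Reduction

variable {N : ℕ}

theorem projV_neg (U : Finset (Fin N)) (R : Fin N → ℤ) : projV U (-R) = -projV U R := by
  funext k
  by_cases hk : k ∈ U <;> simp [projV, hk]

theorem neg_mem_filter_projV {Rset : Finset (Fin N → ℤ)} (hbid : ∀ R ∈ Rset, -R ∈ Rset)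
    {U : Finset (Fin N)} {Rb R : Fin N → ℤ} (hR : R ∈ Rset.filter (projV U · = Rb)) :
    -R ∈ Rset.filter (projV U · = -Rb) := by
  obtain ⟨hRs, hproj⟩ := Finset.mem_filter.mp hR
  exact Finset.mem_filter.mpr ⟨hbid R hRs, by rw [projV_neg, hproj]⟩

theorem prod_pow_projV {M : Type*} [CommMonoid M] (U : Finset (Fin N)) (x : Fin N → M)
    {g : ℤ → ℕ} (hg : g 0 = 0) (R : Fin N → ℤ) :
    ∏ i, x i ^ g (projV U R i) = ∏ i ∈ Uᶜ, x i ^ g (R i) := by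
  rw [← Finset.prod_subset (Finset.subset_univ Uᶜ)]
  · refine Finset.prod_congr rfl fun i hi => ?_
    rw [projV, if_neg (Finset.mem_compl.mp hi)]
  · intro i _ hi
    rw [projV, if_pos (by simpa using hi), hg, pow_zero]

theorem prod_mem_mul_prod_pow_projV {M : Type*} [CommMonoid M] (U : Finset (Fin N))
    (x : Fin N → M) {g : ℤ → ℕ} (hg : g 0 = 0) (R : Fin N → ℤ) :
    (∏ i ∈ U, x i ^ g (R i)) * ∏ i, x i ^ g (projV U R i) = ∏ i, x i ^ g (R i) := by
  rw [prod_pow_projV U x hg, Finset.prod_mul_prod_compl]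

variable {Rset : Finset (Fin N → ℤ)} {U : Finset (Fin N)} {K : (Fin N → ℤ) → ℝ}
  {n x : Fin N → ℝ}

theorem Kred_mul_prod_pow (hnx : ∀ i ∈ U, n i = x i) (Rb : Fin N → ℤ) :
    Kred Rset U K n Rb * ∏ i, x i ^ (-Rb i).toNat
      = ∑ R ∈ Rset.filter (projV U · = Rb), K R * ∏ i, x i ^ (-R i).toNat := by
  rw [Kred, Finset.sum_mul]
  refine Finset.sum_congr rfl fun R hR => ?_
  obtain ⟨-, rfl⟩ := Finset.mem_filter.mp hR
  rw [Finset.prod_congr rfl fun i hi => by rw [hnx i hi], mul_assoc,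
    prod_mem_mul_prod_pow_projV U x (g := fun z => (-z).toNat) rfl]

theorem Kred_neg (hbid : ∀ R ∈ Rset, -R ∈ Rset) (Rb : Fin N → ℤ) :
    Kred Rset U K n (-Rb)
      = ∑ R ∈ Rset.filter (projV U · = Rb), K (-R) * ∏ i ∈ U, n i ^ (R i).toNat := by
  refine Finset.sum_nbij' (fun R => -R) (fun R => -R) (fun R hR => ?_)
    (fun R hR => neg_mem_filter_projV hbid hR) (fun R _ => neg_neg R) (fun R _ => neg_neg R)
    (fun R _ => by simp only [Pi.neg_apply, neg_neg])
  simpa using neg_mem_filter_projV hbid hR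

theorem Kred_neg_mul_prod_pow (hbid : ∀ R ∈ Rset, -R ∈ Rset) (hnx : ∀ i ∈ U, n i = x i)
    (Rb : Fin N → ℤ) :
    Kred Rset U K n (-Rb) * ∏ i, x i ^ (Rb i).toNat
      = ∑ R ∈ Rset.filter (projV U · = Rb), K (-R) * ∏ i, x i ^ (R i).toNat := by
  rw [Kred_neg hbid, Finset.sum_mul]
  refine Finset.sum_congr rfl fun R hR => ?_
  obtain ⟨-, rfl⟩ := Finset.mem_filter.mp hR
  rw [Finset.prod_congr rfl fun i hi => by rw [hnx i hi], mul_assoc,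
    prod_mem_mul_prod_pow_projV U x (g := Int.toNat) rfl]

theorem Kred_detailedBalance (hbid : ∀ R ∈ Rset, -R ∈ Rset) (hnx : ∀ i ∈ U, n i = x i)
    (hx : ∀ R ∈ Rset, K R * ∏ i, x i ^ (-R i).toNat = K (-R) * ∏ i, x i ^ (R i).toNat)
    (Rb : Fin N → ℤ) :
    Kred Rset U K n Rb * ∏ i, x i ^ (-Rb i).toNat
      = Kred Rset U K n (-Rb) * ∏ i, x i ^ (Rb i).toNat := by
  rw [Kred_mul_prod_pow hnx, Kred_neg_mul_prod_pow hbid hnx]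
  exact Finset.sum_congr rfl fun R hR => hx R (Finset.mem_filter.mp hR).1

end Reduction

section Energy

variable {N : ℕ}

theorem prod_exp_neg_pow_toNat (E : Fin N → ℝ) (S : Fin N → ℤ) :
    ∏ i, Real.exp (-E i) ^ (S i).toNat = Real.exp (-∑ i, ((S i).toNat : ℝ) * E i) := by
  rw [← Finset.sum_neg_distrib, Real.exp_sum]
  refine Finset.prod_congr rfl fun i _ => ?_
  rw [← Real.exp_nat_mul, mul_neg]

theorem mul_prod_exp_neg_pow_eq_of_log_div {R : Fin N → ℤ} {k k' : ℝ} (hk : 0 < k) (hk' : 0 < k')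
    {E : Fin N → ℝ} (hE : Real.log (k' / k) = ∑ i, (R i : ℝ) * E i) :
    k * ∏ i, Real.exp (-E i) ^ (-R i).toNat = k' * ∏ i, Real.exp (-E i) ^ (R i).toNat := by
  have hk'k : k' = k * Real.exp (∑ i, (R i : ℝ) * E i) := by
    rw [← hE, Real.exp_log (div_pos hk' hk), mul_div_cancel₀ _ hk.ne']
  -- `(-z).toNat = z.toNat - z` turns the exponent on the left into the one on the right
  have hsum : ∑ i, ((-R i).toNat : ℝ) * E i
      = ∑ i, ((R i).toNat : ℝ) * E i - ∑ i, (R i : ℝ) * E i := by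
    rw [← Finset.sum_sub_distrib]
    refine Finset.sum_congr rfl fun i _ => ?_
    have h := congrArg (Int.cast : ℤ → ℝ) (Int.toNat_sub_toNat_neg (R i))
    push_cast at h
    rw [← sub_mul, ← h, sub_sub_cancel]
  rw [prod_exp_neg_pow_toNat, prod_exp_neg_pow_toNat, hk'k, hsum, mul_assoc, ← Real.exp_add]
  ring_nf

theorem exists_energy_apply_eq {Rset : Finset (Fin N → ℤ)} {w : (Fin N → ℤ) → ℝ}
    {E m : Fin N → ℝ} (hE : ∀ R ∈ Rset, w R = ∑ i, (R i : ℝ) * E i)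
    (hm : ∀ R ∈ Rset, ∑ i, m i * (R i : ℝ) = 0) {t : Fin N} (hmt : m t ≠ 0) (v : ℝ) :
    ∃ E' : Fin N → ℝ, (∀ R ∈ Rset, w R = ∑ i, (R i : ℝ) * E' i) ∧ E' t = v := by
  refine ⟨E + ((v - E t) / m t) • m, fun R hR => ?_, ?_⟩
  · have hshift : ∑ i, (R i : ℝ) * (E + ((v - E t) / m t) • m) i
        = ∑ i, (R i : ℝ) * E i + (v - E t) / m t * ∑ i, m i * (R i : ℝ) := by
      rw [Finset.mul_sum, ← Finset.sum_add_distrib]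
      refine Finset.sum_congr rfl fun i _ => ?_
      simp only [Pi.add_apply, Pi.smul_apply, smul_eq_mul]
      ring
    rw [hshift, hm R hR, mul_zero, add_zero, hE R hR]
  · simp only [Pi.add_apply, Pi.smul_apply, smul_eq_mul]
    field_simp
    ring

end Energy

theorem stmt13_general (N : ℕ) (Rset : Finset (Fin N → ℤ)) (K : (Fin N → ℤ) → ℝ)
    (hbid : ∀ R ∈ Rset, -R ∈ Rset)
    (hK : ∀ R ∈ Rset, 0 < K R)
    (hDB : ∃ E : Fin N → ℝ, ∀ R ∈ Rset,
        Real.log (K (-R) / K R) = ∑ i, (R i : ℝ) * E i)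
    (hM : ∃ m : Fin N → ℝ, m ≠ 0 ∧ ∀ R ∈ Rset, ∑ i, m i * (R i : ℝ) = 0) :
    ∃ t : Fin N, ∀ nt : ℝ, 0 < nt →
      ∃ Nb : Fin N → ℝ, (∀ i, 0 < Nb i) ∧
        ∀ Rb ∈ RV Rset {t},
          Kred Rset {t} K (fun _ => nt) Rb * ∏ i, Nb i ^ ((-(Rb i)).toNat)
            = Kred Rset {t} K (fun _ => nt) (-Rb) * ∏ i, Nb i ^ ((Rb i).toNat) := by
  obtain ⟨E, hE⟩ := hDB
  obtain ⟨m, hm0, hm⟩ := hM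
  obtain ⟨t, hmt⟩ := Function.ne_iff.mp hm0
  refine ⟨t, fun nt hnt => ?_⟩
  obtain ⟨E', hE', hE't⟩ := exists_energy_apply_eq hE hm hmt (-Real.log nt)
  have hfrozen : ∀ i ∈ ({t} : Finset (Fin N)), nt = Real.exp (-E' i) := by
    intro i hi
    rw [Finset.mem_singleton.mp hi, hE't, neg_neg, Real.exp_log hnt]
  refine ⟨fun i => Real.exp (-E' i), fun i => Real.exp_pos _, fun Rb _ => ?_⟩
  exact Kred_detailedBalance hbid hfrozen
    (fun R hR => mul_prod_exp_neg_pow_eq_of_log_div (hK R hR) (hK _ (hbid R hR)) (hE' R hR)) Rb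

/-- Let `(Ω, R, K)` be a bidirectional kinetic system satisfying detailed
balance (there is an energy `E` with `log(K_{-R}/K_R) = ∑ i, R i E i`), whose
conservation-law space is nontrivial. Then there is a substance `t` such that for every
frozen value `nt > 0`, the reduced kinetic system obtained by freezing the concentration of
`t` at `nt` satisfies the detailed balance property. -/
theorem stmt13 (N : ℕ) (Rset : Finset (Fin N → ℤ)) (K : (Fin N → ℤ) → ℝ)
    (h0 : ∀ R ∈ Rset, R ≠ 0)
    (hbid : ∀ R ∈ Rset, -R ∈ Rset)
    (hK : ∀ R ∈ Rset, 0 < K R)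
    (hDB : ∃ E : Fin N → ℝ, ∀ R ∈ Rset,
        Real.log (K (-R) / K R) = ∑ i, (R i : ℝ) * E i)
    (hM : ∃ m : Fin N → ℝ, m ≠ 0 ∧ ∀ R ∈ Rset, ∑ i, m i * (R i : ℝ) = 0) :
    ∃ t : Fin N, ∀ nt : ℝ, 0 < nt →
      ∃ Nb : Fin N → ℝ, (∀ i, 0 < Nb i) ∧
        ∀ Rb ∈ RV Rset {t},
          Kred Rset {t} K (fun _ => nt) Rb * ∏ i, Nb i ^ ((-(Rb i)).toNat)
            = Kred Rset {t} K (fun _ => nt) (-Rb) * ∏ i, Nb i ^ ((Rb i).toNat) :=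
  stmt13_general N Rset K hbid hK hDB hM
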